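/- For all p, q ∈ ℤ, the real part of R(e^{πi/3}; p, q) equals (2p − 2q − 1)·π²/12. -/

import Mathlib

/-!
Formalization of a statement from "Extended Bloch group and the
Cheeger–Chern–Simons class" by W. D. Neumann.
-/

noncomputable section
open scoped Classical
open Complex

namespace ExtendedBloch

/-- The Rogers dilogarithm `𝓡(z) = ½ Log z · Log(1-z) - ∫₀¹ Log(1 - tz)/t dt`. -/
def rogers (z : ℂ) : ℂ :=
  (1 / 2) * Complex.log z * Complex.log (1 - z)
    - ∫ t in (0 : ℝ)..1, Complex.log (1 - (t : ℂ) * z) / (t : ℂ)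

/-- `R(z; p, q) = 𝓡(z) + (πi/2)(p Log(1-z) + q Log z) - π²/6`. -/
def RFun (z : ℂ) (p q : ℤ) : ℂ :=
  rogers z
    + ((Real.pi : ℂ) * Complex.I / 2) *
        ((p : ℂ) * Complex.log (1 - z) + (q : ℂ) * Complex.log z)
    - (Real.pi : ℂ) ^ 2 / 6

/-!
Put `ω = e^{πi/3}`. Then `Log ω = πi/3` and `1 - ω = ω̄`, so `Log(1 - ω) = -πi/3`, and the only
term of `R(ω; p, q)` whose real part is not explicit is the integral. Its real part is
`∫₀¹ log|1 - tω| / t dt = ½ ∫₀¹ log(1 - t + t²) / t dt`. Since `1 - t + t² = (1 + t³) / (1 + t)`,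
expanding both logarithms gives a series whose terms have summable absolute integrals, and
integrating termwise yields `∫₀¹ log(1 - t + t²) / t dt = -⅔ ∑ (-1)ⁿ / (n + 1)² = -π²/18`.
-/

open Real MeasureTheory

local notation "ω" => Complex.exp ((Real.pi : ℂ) * Complex.I / 3)

theorem hasSum_one_div_succ_sq :
    HasSum (fun n : ℕ => 1 / ((n : ℝ) + 1) ^ 2) (π ^ 2 / 6) := by
  have h := (hasSum_nat_add_iff' 1).2 hasSum_zeta_two
  rw [Finset.sum_range_one, Nat.cast_zero, zero_pow two_ne_zero, div_zero, sub_zero] at h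
  exact h.congr_fun fun n => by push_cast; rfl

theorem hasSum_neg_one_pow_div_succ_sq :
    HasSum (fun n : ℕ => (-1 : ℝ) ^ n / ((n : ℝ) + 1) ^ 2) (π ^ 2 / 12) := by
  have hOdd : HasSum (fun n : ℕ => if Odd n then 1 / ((n : ℝ) + 1) ^ 2 else 0) (π ^ 2 / 24) := by
    have hinj : Function.Injective (fun k : ℕ => 2 * k + 1) := fun a b h => by simpa using h
    rw [← hinj.hasSum_iff fun n hn => if_neg fun ⟨k, hk⟩ => hn ⟨k, hk.symm⟩]
    have h := hasSum_one_div_succ_sq.div_const 4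
    rw [show π ^ 2 / 6 / 4 = π ^ 2 / 24 by ring] at h
    refine h.congr_fun fun k => ?_
    simp only [Function.comp, odd_two_mul_add_one, if_true]
    push_cast
    field_simp
    ring
  have h := hasSum_one_div_succ_sq.sub (hOdd.mul_left 2)
  rw [show π ^ 2 / 6 - 2 * (π ^ 2 / 24) = π ^ 2 / 12 by ring] at h
  refine h.congr_fun fun n => ?_
  rcases Nat.even_or_odd n with hn | hn
  · rw [if_neg (Nat.not_odd_iff_even.2 hn), hn.neg_one_pow]
    ring
  · rw [if_pos hn, hn.neg_one_pow]
    ring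

theorem hasSum_log_one_add {x : ℝ} (hx : |x| < 1) :
    HasSum (fun n : ℕ => -(-x) ^ (n + 1) / (n + 1)) (Real.log (1 + x)) := by
  have h := (hasSum_pow_div_log_of_abs_lt_one (x := -x) (by rwa [abs_neg])).neg
  simpa [neg_div] using h

theorem hasSum_log_one_sub_add_sq_div {t : ℝ} (ht₀ : 0 < t) (ht₁ : t < 1) :
    HasSum (fun n : ℕ => (-1 : ℝ) ^ n * (t ^ (3 * n + 2) - t ^ n) / (n + 1))
      (Real.log (1 - t + t ^ 2) / t) := by
  have hcube := hasSum_log_one_add (x := t ^ 3)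
    (by rw [abs_of_pos (by positivity)]; exact pow_lt_one₀ ht₀.le ht₁ (by norm_num))
  have hlin := hasSum_log_one_add (x := t) (by rwa [abs_of_pos ht₀])
  have hfactor : Real.log (1 - t + t ^ 2) = Real.log (1 + t ^ 3) - Real.log (1 + t) := by
    rw [eq_sub_iff_add_eq, ← Real.log_mul (by nlinarith) (by linarith)]
    ring_nf
  rw [hfactor]
  refine ((hcube.sub hlin).div_const t).congr_fun fun n => ?_
  field_simp
  ring

theorem integral_pow_sub_pow_three_mul_add_two (n : ℕ) :
    ∫ t in (0 : ℝ)..1, (t ^ n - t ^ (3 * n + 2)) = 2 / (3 * ((n : ℝ) + 1)) := by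
  rw [intervalIntegral.integral_sub (intervalIntegral.intervalIntegrable_pow _)
    (intervalIntegral.intervalIntegrable_pow _), integral_pow, integral_pow]
  push_cast
  field_simp
  ring

theorem integral_log_one_sub_add_sq_div :
    ∫ t in (0 : ℝ)..1, Real.log (1 - t + t ^ 2) / t = -(π ^ 2 / 18) := by
  set F : ℕ → ℝ → ℝ := fun n t => (-1 : ℝ) ^ n * (t ^ (3 * n + 2) - t ^ n) / (n + 1) with hF
  have hF_int (n : ℕ) :
      ∫ t in (0 : ℝ)..1, F n t = -(2 / 3) * ((-1 : ℝ) ^ n / ((n : ℝ) + 1) ^ 2) := by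
    have h : ∀ t, F n t = -((-1 : ℝ) ^ n / (n + 1)) * (t ^ n - t ^ (3 * n + 2)) := fun t => by
      simp only [hF]; ring
    simp_rw [h, intervalIntegral.integral_const_mul, integral_pow_sub_pow_three_mul_add_two]
    field_simp
  have hF_norm (n : ℕ) : ∫ t in (0 : ℝ)..1, ‖F n t‖ = 2 / 3 * (1 / ((n : ℝ) + 1) ^ 2) := by
    have h : Set.EqOn (fun t => ‖F n t‖) (fun t => 1 / (n + 1) * (t ^ n - t ^ (3 * n + 2)))
        (Set.uIcc 0 1) := fun t ht => by
      rw [Set.uIcc_of_le zero_le_one] at ht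
      have hle : t ^ (3 * n + 2) ≤ t ^ n := pow_le_pow_of_le_one ht.1 ht.2 (by omega)
      simp only [hF, norm_div, norm_mul, norm_pow, norm_neg, norm_one, one_pow, one_mul,
        Real.norm_eq_abs, abs_of_nonpos (sub_nonpos.2 hle),
        abs_of_pos (Nat.cast_add_one_pos (α := ℝ) n)]
      ring
    rw [intervalIntegral.integral_congr h, intervalIntegral.integral_const_mul,
      integral_pow_sub_pow_three_mul_add_two]
    field_simp
  have hsum := hasSum_integral_of_summable_integral_norm (μ := volume.restrict (Set.Ioc 0 1))
    (F := F) (fun n => (by fun_prop : Continuous (F n)).integrableOn_Ioc) (by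
      simp_rw [← intervalIntegral.integral_of_le zero_le_one, hF_norm]
      exact (hasSum_one_div_succ_sq.mul_left _).summable)
  simp_rw [← intervalIntegral.integral_of_le zero_le_one, hF_int] at hsum
  have hF_tsum :
      ∫ t in (0 : ℝ)..1, ∑' n, F n t = ∫ t in (0 : ℝ)..1, Real.log (1 - t + t ^ 2) / t := by
    refine intervalIntegral.integral_congr_ae (Filter.Eventually.of_forall fun t ht => ?_)
    rw [Set.uIoc_of_le zero_le_one] at ht
    rcases ht.2.lt_or_eq with ht₁ | rfl
    · exact (hasSum_log_one_sub_add_sq_div ht.1 ht₁).tsum_eq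
    · simp [hF]
  have h := hasSum_neg_one_pow_div_succ_sq.mul_left (-(2 / 3))
  rw [show -(2 / 3) * (π ^ 2 / 12) = -(π ^ 2 / 18) by ring] at h
  rw [← hF_tsum]
  exact hsum.unique h

theorem intervalIntegrable_div_ofReal_of_differentiableAt {g : ℝ → ℂ} {b : ℝ} (hg₀ : g 0 = 0)
    (hg : ∀ t ∈ Set.uIcc 0 b, DifferentiableAt ℝ g t) :
    IntervalIntegrable (fun t : ℝ => g t / t) volume 0 b := by
  have hcont : ContinuousOn (dslope g 0) (Set.uIcc 0 b) := fun t ht => by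
    rcases eq_or_ne t 0 with rfl | ht₀
    · exact (continuousAt_dslope_same.2 (hg 0 ht)).continuousWithinAt
    · exact ((continuousAt_dslope_of_ne ht₀).2 (hg t ht).continuousAt).continuousWithinAt
  refine hcont.intervalIntegrable.congr_uIoo fun t ht => ?_
  have ht₀ : t ≠ 0 := by
    rintro rfl
    simp only [Set.uIoo, Set.mem_Ioo, inf_lt_iff, lt_sup_iff, lt_self_iff_false] at ht
    grind
  simp [dslope_of_ne _ ht₀, slope_def_module, hg₀, div_eq_inv_mul, Complex.real_smul]

theorem exp_pi_mul_I_div_three : ω = 1 / 2 + (√3 / 2 : ℝ) * Complex.I := by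
  rw [show (π : ℂ) * Complex.I / 3 = (π / 3 : ℝ) * Complex.I by push_cast; ring,
    Complex.exp_mul_I, ← Complex.ofReal_cos, ← Complex.ofReal_sin, cos_pi_div_three,
    sin_pi_div_three]
  push_cast
  ring

theorem one_sub_exp_pi_mul_I_div_three : 1 - ω = Complex.exp (-(π * Complex.I / 3)) := by
  rw [exp_pi_mul_I_div_three, show -((π : ℂ) * Complex.I / 3) = (-(π / 3) : ℝ) * Complex.I by
    push_cast; ring, Complex.exp_mul_I, ← Complex.ofReal_cos, ← Complex.ofReal_sin, Real.cos_neg,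
    Real.sin_neg, cos_pi_div_three, sin_pi_div_three]
  push_cast
  ring

theorem log_exp_pi_mul_I_div_three : Complex.log ω = π * Complex.I / 3 := by
  rw [Complex.log_exp] <;> simp <;> linarith [pi_pos]

theorem log_one_sub_exp_pi_mul_I_div_three : Complex.log (1 - ω) = -(π * Complex.I / 3) := by
  rw [one_sub_exp_pi_mul_I_div_three, Complex.log_exp] <;> simp <;> linarith [pi_pos]

theorem exp_pi_mul_I_div_three_re : (ω).re = 1 / 2 := by
  simp [exp_pi_mul_I_div_three]

theorem exp_pi_mul_I_div_three_im : (ω).im = √3 / 2 := by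
  simp [exp_pi_mul_I_div_three]

theorem re_one_sub_ofReal_mul_exp_pi_mul_I_div_three (t : ℝ) : (1 - t * ω).re = 1 - t / 2 := by
  rw [Complex.sub_re, Complex.one_re, Complex.re_ofReal_mul, exp_pi_mul_I_div_three_re]
  ring

theorem normSq_one_sub_ofReal_mul_exp_pi_mul_I_div_three (t : ℝ) :
    Complex.normSq (1 - t * ω) = 1 - t + t ^ 2 := by
  rw [Complex.normSq_apply, re_one_sub_ofReal_mul_exp_pi_mul_I_div_three, Complex.sub_im,
    Complex.one_im, Complex.im_ofReal_mul, exp_pi_mul_I_div_three_im]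
  nlinarith [sq_sqrt (show (0 : ℝ) ≤ 3 by norm_num)]

theorem re_log_one_sub_ofReal_mul_exp_pi_mul_I_div_three_div (t : ℝ) :
    (Complex.log (1 - t * ω) / t).re = Real.log (1 - t + t ^ 2) / t / 2 := by
  rw [Complex.div_ofReal_re, Complex.log_re, Complex.norm_def,
    normSq_one_sub_ofReal_mul_exp_pi_mul_I_div_three, Real.log_sqrt (by nlinarith)]
  ring

theorem intervalIntegrable_log_one_sub_ofReal_mul_exp_pi_mul_I_div_three_div :
    IntervalIntegrable (fun t : ℝ => Complex.log (1 - t * ω) / t) volume 0 1 := by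
  refine intervalIntegrable_div_ofReal_of_differentiableAt (by simp) fun t ht => ?_
  rw [Set.uIcc_of_le zero_le_one] at ht
  have hslit : 1 - t * ω ∈ Complex.slitPlane := Complex.mem_slitPlane_iff.2 <| Or.inl <| by
    rw [re_one_sub_ofReal_mul_exp_pi_mul_I_div_three]
    linarith [ht.2]
  exact ((Complex.differentiableAt_log hslit).restrictScalars ℝ).comp
    (f := fun t : ℝ => 1 - t * ω) t (by fun_prop)

theorem re_integral_log_one_sub_ofReal_mul_exp_pi_mul_I_div_three_div :
    (∫ t in (0 : ℝ)..1, Complex.log (1 - t * ω) / t).re = -(π ^ 2 / 36) := by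
  have h := intervalIntegral.intervalIntegral_re
    intervalIntegrable_log_one_sub_ofReal_mul_exp_pi_mul_I_div_three_div
  simp only [RCLike.re_to_complex] at h
  rw [← h]
  simp_rw [re_log_one_sub_ofReal_mul_exp_pi_mul_I_div_three_div, intervalIntegral.integral_div,
    integral_log_one_sub_add_sq_div]
  ring

/-- `Re R(e^{πi/3}; p, q) = (2p - 2q - 1) π²/12`. -/
theorem RFun_omega_re (p q : ℤ) :
    (RFun (Complex.exp ((Real.pi : ℂ) * Complex.I / 3)) p q).re
      = (2 * (p : ℝ) - 2 * (q : ℝ) - 1) * Real.pi ^ 2 / 12 := by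
  rw [RFun, rogers, log_exp_pi_mul_I_div_three, log_one_sub_exp_pi_mul_I_div_three]
  set J := ∫ t in (0 : ℝ)..1, Complex.log (1 - t * ω) / t
  have hJ : J.re = -(π ^ 2 / 36) := re_integral_log_one_sub_ofReal_mul_exp_pi_mul_I_div_three_div
  calc _ = (((π ^ 2 / 18 + π ^ 2 * (p - q) / 6 - π ^ 2 / 6 : ℝ) : ℂ) - J).re := by
        congr 1
        push_cast
        linear_combination (-(π : ℂ) ^ 2 / 18 + (π : ℂ) ^ 2 * (q - p) / 6) * Complex.I_sq
    _ = _ := by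
        rw [Complex.sub_re, Complex.ofReal_re, hJ]
        ring

end ExtendedBloch
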